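/- Let g_1, g_2 ∈ ℝ^p with ⟨g_1, g_2⟩ < ‖g_2‖² and ⟨g_1, g_2⟩ < ‖g_1‖². Define γ* = (‖g_2‖² − ⟨g_1, g_2⟩) / ‖g_1 − g_2‖² (well-defined since g_1 ≠ g_2 under the hypotheses) and d = γ* g_1 + (1 − γ*) g_2. Then γ* ∈ (0, 1), and ⟨d, g_1⟩ = ⟨d, g_2⟩ = ‖d‖² ≥ 0; in particular −d is a common descent direction: both directional derivatives ⟨−d, g_k⟩ ≤ 0, with strict inequality when d ≠ 0. -/

import Mathlib

/-!
With `γ` the weight of the statement, `d = g₂ + γ • (g₁ - g₂)` is the orthogonal projection of `0`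
onto the line through `g₁` and `g₂`, so `⟪d, g₁ - g₂⟫ = 0`, i.e. `⟪d, g₁⟫ = ⟪d, g₂⟫`. Since `d` is an
affine combination of `g₁` and `g₂`, this common value is `⟪d, d⟫ = ‖d‖²`. The hypotheses say
`‖g₂‖² - ⟪g₁, g₂⟫` and `‖g₁‖² - ⟪g₁, g₂⟫` are positive; they sum to `‖g₁ - g₂‖²`, whence `0 < γ < 1`.
-/

open scoped RealInnerProductSpace

section MGDA

variable {E : Type*} [NormedAddCommGroup E] [InnerProductSpace ℝ E]

noncomputable def mgdaWeight (g₁ g₂ : E) : ℝ :=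
  (‖g₂‖ ^ 2 - ⟪g₁, g₂⟫) / ‖g₁ - g₂‖ ^ 2

noncomputable def mgdaDirection (g₁ g₂ : E) : E :=
  mgdaWeight g₁ g₂ • g₁ + (1 - mgdaWeight g₁ g₂) • g₂

lemma mgdaWeight_mem_Ioo {g₁ g₂ : E} (h₁ : ⟪g₁, g₂⟫ < ‖g₂‖ ^ 2) (h₂ : ⟪g₁, g₂⟫ < ‖g₁‖ ^ 2) :
    mgdaWeight g₁ g₂ ∈ Set.Ioo 0 1 := by
  have hS : ‖g₁ - g₂‖ ^ 2 = ‖g₁‖ ^ 2 - 2 * ⟪g₁, g₂⟫ + ‖g₂‖ ^ 2 := norm_sub_sq_real g₁ g₂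
  have hS_pos : 0 < ‖g₁ - g₂‖ ^ 2 := by rw [hS]; linarith
  refine ⟨div_pos (by linarith) hS_pos, ?_⟩
  rw [mgdaWeight, div_lt_one hS_pos, hS]
  linarith

lemma inner_mgdaDirection_sub (g₁ g₂ : E) : ⟪mgdaDirection g₁ g₂, g₁ - g₂⟫ = 0 := by
  by_cases h : g₁ - g₂ = 0
  · rw [h, inner_zero_right]
  have hS : ‖g₁ - g₂‖ ^ 2 ≠ 0 := by positivity
  have hd : mgdaDirection g₁ g₂ = g₂ + mgdaWeight g₁ g₂ • (g₁ - g₂) := by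
    rw [mgdaDirection, smul_sub, sub_smul, one_smul]; abel
  have hγ : mgdaWeight g₁ g₂ * ‖g₁ - g₂‖ ^ 2 = ‖g₂‖ ^ 2 - ⟪g₁, g₂⟫ := div_mul_cancel₀ _ hS
  rw [hd, inner_add_left, real_inner_smul_left, real_inner_self_eq_norm_sq, hγ, inner_sub_right,
    real_inner_self_eq_norm_sq, real_inner_comm]
  ring

lemma inner_mgdaDirection_left_eq_right (g₁ g₂ : E) :
    ⟪mgdaDirection g₁ g₂, g₁⟫ = ⟪mgdaDirection g₁ g₂, g₂⟫ := by
  rw [← sub_eq_zero, ← inner_sub_right, inner_mgdaDirection_sub]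

lemma inner_mgdaDirection_left (g₁ g₂ : E) :
    ⟪mgdaDirection g₁ g₂, g₁⟫ = ‖mgdaDirection g₁ g₂‖ ^ 2 := by
  set γ := mgdaWeight g₁ g₂
  set d := mgdaDirection g₁ g₂
  calc ⟪d, g₁⟫ = γ * ⟪d, g₁⟫ + (1 - γ) * ⟪d, g₂⟫ := by
        rw [← inner_mgdaDirection_left_eq_right]; ring
    _ = ⟪d, d⟫ := by
        rw [show d = γ • g₁ + (1 - γ) • g₂ from rfl, inner_add_right, real_inner_smul_right,
          real_inner_smul_right]
    _ = ‖d‖ ^ 2 := real_inner_self_eq_norm_sq d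

lemma inner_mgdaDirection_right (g₁ g₂ : E) :
    ⟪mgdaDirection g₁ g₂, g₂⟫ = ‖mgdaDirection g₁ g₂‖ ^ 2 := by
  rw [← inner_mgdaDirection_left_eq_right, inner_mgdaDirection_left]

end MGDA

/-- Two-task MGDA: the minimal-norm point of the segment between the two task
gradients has equal inner products with both gradients, yielding a common descent
direction. -/
theorem stmt_8 (p : ℕ) (g₁ g₂ : EuclideanSpace ℝ (Fin p))
    (h₁ : inner g₁ g₂ (𝕜 := ℝ) < ‖g₂‖ ^ 2) (h₂ : inner g₁ g₂ (𝕜 := ℝ) < ‖g₁‖ ^ 2)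
    (γ : ℝ) (hγ : γ = (‖g₂‖ ^ 2 - inner g₁ g₂ (𝕜 := ℝ)) / ‖g₁ - g₂‖ ^ 2)
    (d : EuclideanSpace ℝ (Fin p)) (hd : d = γ • g₁ + (1 - γ) • g₂) :
    (0 < γ ∧ γ < 1) ∧
    inner d g₁ (𝕜 := ℝ) = ‖d‖ ^ 2 ∧ inner d g₂ (𝕜 := ℝ) = ‖d‖ ^ 2 ∧
    (0 : ℝ) ≤ ‖d‖ ^ 2 ∧
    inner (-d) g₁ (𝕜 := ℝ) ≤ 0 ∧ inner (-d) g₂ (𝕜 := ℝ) ≤ 0 ∧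
    (d ≠ 0 → inner (-d) g₁ (𝕜 := ℝ) < 0 ∧ inner (-d) g₂ (𝕜 := ℝ) < 0) := by
  obtain rfl : γ = mgdaWeight g₁ g₂ := hγ
  obtain rfl : d = mgdaDirection g₁ g₂ := hd
  have hd₁ := inner_mgdaDirection_left g₁ g₂
  have hd₂ := inner_mgdaDirection_right g₁ g₂
  have hnorm_sq_nonneg := sq_nonneg ‖mgdaDirection g₁ g₂‖
  refine ⟨mgdaWeight_mem_Ioo h₁ h₂, hd₁, hd₂, hnorm_sq_nonneg, ?_, ?_, fun hne => ?_⟩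
  all_goals simp only [inner_neg_left, hd₁, hd₂, neg_nonpos, neg_lt_zero, and_self]
  exacts [hnorm_sq_nonneg, hnorm_sq_nonneg, pow_pos (norm_pos_iff.mpr hne) 2]
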